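/- Let A be a graded-commutative superalgebra over a field of characteristic not 2. Then Nil(A) := { x ∈ A : x^n = 0 for some n } equals Nil(R) ⊕ A_0^odd ⊕ A_1^ev, where R = A_0^ev ⊕ A_1^odd, and Nil(A) is a two-sided ideal of A with A/Nil(A) a reduced commutative ring. -/

import Mathlib

/-- A graded-commutative graded superalgebra over `k`: a `ℤ × ZMod 2`-graded
`k`-algebra satisfying the sign rule `ab = (-1)^(|a|·|b| + deg a · deg b) ba`
for homogeneous elements. -/
structure GradedSuperalgebra (k A : Type) [Field k] [Ring A] [Algebra k A] where
  grading : ℤ × ZMod 2 → Submodule k A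
  one_mem : (1 : A) ∈ grading (0, 0)
  mul_mem : ∀ {i j : ℤ × ZMod 2} {a b : A},
    a ∈ grading i → b ∈ grading j → a * b ∈ grading (i + j)
  internal : DirectSum.IsInternal grading
  comm : ∀ {m n : ℤ} {s t : ZMod 2} {a b : A}, a ∈ grading (m, s) → b ∈ grading (n, t) →
    a * b = ((-1 : k) ^ ((s * t).val + (m * n).natAbs)) • (b * a)

namespace GradedSuperalgebra

variable {k A : Type} [Field k] [Ring A] [Algebra k A] (GS : GradedSuperalgebra k A)

/-- The sum of the graded pieces whose index satisfies a predicate. -/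
def piece (P : ℤ × ZMod 2 → Prop) : Submodule k A :=
  ⨆ p : {p : ℤ × ZMod 2 // P p}, GS.grading p

/-- `R = A₀ᵉᵛ ⊕ A₁ᵒᵈᵈ`: even ℤ-degree with parity `0` together with odd ℤ-degree
with parity `1`; an ordinary-commutative subalgebra of `A`. -/
def Rsub : Submodule k A :=
  GS.piece fun p => (Even p.1 ∧ p.2 = 0) ∨ (Odd p.1 ∧ p.2 = 1)

/-- `A₀ᵉᵛ`: even ℤ-degree, parity `0`. -/
def A0ev : Submodule k A := GS.piece fun p => Even p.1 ∧ p.2 = 0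

/-- `A₁ᵒᵈᵈ`: odd ℤ-degree, parity `1`. -/
def A1odd : Submodule k A := GS.piece fun p => Odd p.1 ∧ p.2 = 1

/-- `A₀ᵒᵈᵈ`: odd ℤ-degree, parity `0`. -/
def A0odd : Submodule k A := GS.piece fun p => Odd p.1 ∧ p.2 = 0

/-- `A₁ᵉᵛ`: even ℤ-degree, parity `1`. -/
def A1ev : Submodule k A := GS.piece fun p => Even p.1 ∧ p.2 = 1

/-- A submodule of `A` is homogeneous if it is spanned by its homogeneous elements. -/
def IsHomogeneous (I : Submodule k A) : Prop :=
  I = Submodule.span k {x : A | x ∈ I ∧ ∃ p, x ∈ GS.grading p}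

end GradedSuperalgebra

/-!
Let `I` be the two-sided ideal spanned by the homogeneous elements of square zero. By the sign
rule a homogeneous `z` commutes or anticommutes with every homogeneous `a`, so
`z * a * z = ± a * z * z`; hence if `z * z = 0` the ideal spanned by `z` has square zero, and `I`,
a sum of such ideals, is nil. Two homogeneous elements that do not commute anticommute with an odd
sign, which (in characteristic `≠ 2`) forces one of them to square to zero, so every commutator
lies in `I`. Thus `A ⧸ I` is commutative and `x` is nilpotent iff its image is, so the nilpotents
of `A` form an ideal. Homogeneous elements of `A₀ᵒᵈᵈ` and `A₁ᵉᵛ` square to zero, so these pieces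
lie in `I`, which gives the decomposition `Nil(A) = Nil(R) ⊕ A₀ᵒᵈᵈ ⊕ A₁ᵉᵛ`.
-/

namespace TwoSidedIdeal

variable {R : Type*} [Ring R]

theorem isNilpotent_mk'_iff {I : TwoSidedIdeal R} (hI : ∀ x ∈ I, IsNilpotent x) {x : R} :
    IsNilpotent (I.ringCon.mk' x) ↔ IsNilpotent x := by
  refine ⟨fun ⟨n, hn⟩ => (hI (x ^ n) ?_).of_pow, fun h => h.map _⟩
  rwa [← ker_ringCon_mk' I, mem_ker, map_pow]

theorem isNilpotent_of_mem_sup {I J : TwoSidedIdeal R} (hI : ∀ x ∈ I, IsNilpotent x)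
    (hJ : ∀ x ∈ J, IsNilpotent x) {x : R} (hx : x ∈ I ⊔ J) : IsNilpotent x := by
  obtain ⟨i, hi, j, hj, rfl⟩ := mem_sup.mp hx
  have hi0 : I.ringCon.mk' i = 0 := (mem_ker _).mp (by rwa [ker_ringCon_mk'])
  rw [← isNilpotent_mk'_iff hI, map_add, hi0, zero_add]
  exact (hJ j hj).map _

theorem mul_eq_zero_of_mem_span_singleton {z : R} (hz : ∀ a, z * a * z = 0) {x y : R}
    (hx : x ∈ span {z}) (hy : y ∈ span {z}) : x * y = 0 := by
  have hzy : ∀ y ∈ span {z}, ∀ a, z * a * y = 0 := by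
    intro y hy
    induction hy using span_induction with
    | mem y hy => rw [Set.mem_singleton_iff.mp hy]; exact hz
    | zero => simp
    | add y y' _ _ h h' => intro a; rw [mul_add, h, h', add_zero]
    | neg y _ h => intro a; rw [mul_neg, h, neg_zero]
    | left_absorb b y _ h => intro a; rw [← mul_assoc, mul_assoc z, h]
    | right_absorb b y _ h => intro a; rw [← mul_assoc, h, zero_mul]
  induction hx using span_induction generalizing y with
  | mem x hx => rw [Set.mem_singleton_iff.mp hx, ← mul_one z]; exact hzy y hy 1
  | zero => exact zero_mul y
  | add x x' _ _ h h' => rw [add_mul, h hy, h' hy, add_zero]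
  | neg x _ h => rw [neg_mul, h hy, neg_zero]
  | left_absorb a x _ h => rw [mul_assoc, h hy, mul_zero]
  | right_absorb b x _ h => rw [mul_assoc, h (mul_mem_left _ b y hy)]

theorem isNilpotent_of_mem_span {S : Set R} (hS : ∀ z ∈ S, ∀ a, z * a * z = 0) {x : R}
    (hx : x ∈ span S) : IsNilpotent x := by
  suffices ∃ J : TwoSidedIdeal R, (∀ y ∈ J, IsNilpotent y) ∧ x ∈ J by
    obtain ⟨J, hJ, hxJ⟩ := this
    exact hJ x hxJ
  induction hx using span_induction with
  | mem z hz =>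
    refine ⟨span {z}, fun y hy => ⟨2, ?_⟩, subset_span rfl⟩
    rw [sq]
    exact mul_eq_zero_of_mem_span_singleton (hS z hz) hy hy
  | zero => exact ⟨⊥, fun y hy => by rw [(mem_bot R).mp hy]; exact IsNilpotent.zero, zero_mem _⟩
  | add x y _ _ hx hy =>
    obtain ⟨I, hI, hxI⟩ := hx
    obtain ⟨J, hJ, hyJ⟩ := hy
    exact ⟨I ⊔ J, fun _ => isNilpotent_of_mem_sup hI hJ,
      add_mem _ (mem_sup_left hxI) (mem_sup_right hyJ)⟩
  | neg x _ hx =>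
    obtain ⟨J, hJ, hxJ⟩ := hx
    exact ⟨J, hJ, neg_mem _ hxJ⟩
  | left_absorb a x _ hx =>
    obtain ⟨J, hJ, hxJ⟩ := hx
    exact ⟨J, hJ, mul_mem_left _ a x hxJ⟩
  | right_absorb b x _ hx =>
    obtain ⟨J, hJ, hxJ⟩ := hx
    exact ⟨J, hJ, mul_mem_right _ x b hxJ⟩

theorem commute_mk' {I : TwoSidedIdeal R} (hcomm : ∀ a b : R, a * b - b * a ∈ I) (a b : R) :
    Commute (I.ringCon.mk' a) (I.ringCon.mk' b) := by
  rw [Commute, SemiconjBy, ← map_mul, ← map_mul, ← sub_eq_zero, ← map_sub, ← mem_ker,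
    ker_ringCon_mk']
  exact hcomm a b

theorem isNilpotent_add_of_commutator_mem {I : TwoSidedIdeal R} (hI : ∀ x ∈ I, IsNilpotent x)
    (hcomm : ∀ a b : R, a * b - b * a ∈ I) {x y : R} (hx : IsNilpotent x) (hy : IsNilpotent y) :
    IsNilpotent (x + y) := by
  rw [← isNilpotent_mk'_iff hI, map_add]
  exact (commute_mk' hcomm x y).isNilpotent_add (hx.map _) (hy.map _)

theorem isNilpotent_mul_left_of_commutator_mem {I : TwoSidedIdeal R}
    (hI : ∀ x ∈ I, IsNilpotent x) (hcomm : ∀ a b : R, a * b - b * a ∈ I) (a : R) {x : R}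
    (hx : IsNilpotent x) : IsNilpotent (a * x) := by
  rw [← isNilpotent_mk'_iff hI, map_mul]
  exact (commute_mk' hcomm a x).isNilpotent_mul_left (hx.map _)

theorem isNilpotent_mul_right_of_commutator_mem {I : TwoSidedIdeal R}
    (hI : ∀ x ∈ I, IsNilpotent x) (hcomm : ∀ a b : R, a * b - b * a ∈ I) (a : R) {x : R}
    (hx : IsNilpotent x) : IsNilpotent (x * a) := by
  rw [← isNilpotent_mk'_iff hI, map_mul]
  exact (commute_mk' hcomm x a).isNilpotent_mul_right (hx.map _)

end TwoSidedIdeal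

namespace GradedSuperalgebra

variable {k A : Type} [Field k] [Ring A] [Algebra k A] (GS : GradedSuperalgebra k A)

theorem mul_comm_or_anticomm {m n : ℤ} {s t : ZMod 2} {a b : A} (ha : a ∈ GS.grading (m, s))
    (hb : b ∈ GS.grading (n, t)) :
    (s * t + m * n = (0 : ZMod 2) ∧ a * b = b * a) ∨
      (s * t + m * n = (1 : ZMod 2) ∧ a * b = -(b * a)) := by
  have h := GS.comm ha hb
  have hcast : (((s * t).val + (m * n).natAbs : ℕ) : ZMod 2) = s * t + m * n := by
    push_cast [ZMod.natCast_val, ZMod.natAbs_mod_two]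
    simp
  rcases Nat.even_or_odd ((s * t).val + (m * n).natAbs) with he | ho
  · rw [he.neg_one_pow, one_smul] at h
    exact Or.inl ⟨hcast ▸ he.natCast_zmod_two, h⟩
  · rw [ho.neg_one_pow, neg_one_smul] at h
    exact Or.inr ⟨hcast ▸ ho.natCast_zmod_two, h⟩

theorem mul_self_eq_zero_of_odd (h2 : (2 : k) ≠ 0) {m : ℤ} {s : ZMod 2} {a : A}
    (ha : a ∈ GS.grading (m, s)) (hodd : s + m = (1 : ZMod 2)) : a * a = 0 := by
  rcases GS.mul_comm_or_anticomm ha ha with ⟨hev, -⟩ | ⟨-, h⟩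
  · have hsq : ∀ u v : ZMod 2, u * u + v * v = u + v := by decide
    rw [hsq, hodd] at hev
    exact absurd hev one_ne_zero
  · have h' : (2 : k) • (a * a) = 0 := by
      rw [two_smul]
      nth_rewrite 1 [h]
      exact neg_add_cancel _
    exact (smul_eq_zero.mp h').resolve_left h2

theorem commute_or_anticomm_and_mul_self_eq_zero (h2 : (2 : k) ≠ 0) {p q : ℤ × ZMod 2} {a b : A}
    (ha : a ∈ GS.grading p) (hb : b ∈ GS.grading q) :
    Commute a b ∨ (a * b = -(b * a) ∧ (a * a = 0 ∨ b * b = 0)) := by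
  obtain ⟨m, s⟩ := p
  obtain ⟨n, t⟩ := q
  rcases GS.mul_comm_or_anticomm ha hb with ⟨-, h⟩ | ⟨hodd, h⟩
  · exact Or.inl h
  · have hpar : ∀ s t m n : ZMod 2, s * t + m * n = 1 → s + m = 1 ∨ t + n = 1 := by decide
    exact Or.inr ⟨h, (hpar _ _ _ _ hodd).imp (GS.mul_self_eq_zero_of_odd h2 ha)
      (GS.mul_self_eq_zero_of_odd h2 hb)⟩

@[elab_as_elim]
theorem induction_on_homogeneous {motive : A → Prop} (a : A)
    (mem : ∀ p, ∀ x ∈ GS.grading p, motive x) (zero : motive 0)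
    (add : ∀ x y, motive x → motive y → motive (x + y)) : motive a :=
  Submodule.iSup_induction GS.grading (motive := motive)
    (by rw [GS.internal.submodule_iSup_eq_top]; exact Submodule.mem_top) mem zero add

def homogeneousSquareZero : Set A :=
  {z | SetLike.IsHomogeneousElem GS.grading z ∧ z * z = 0}

theorem mul_mul_eq_zero_of_mem_homogeneousSquareZero {z : A} (hz : z ∈ GS.homogeneousSquareZero)
    (a : A) : z * a * z = 0 := by
  obtain ⟨⟨⟨m, s⟩, hzp⟩, hz2⟩ := hz
  induction a using GS.induction_on_homogeneous with
  | mem q x hx =>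
    obtain ⟨n, t⟩ := q
    rcases GS.mul_comm_or_anticomm hzp hx with ⟨-, h⟩ | ⟨-, h⟩ <;>
      simp [h, mul_assoc, hz2]
  | zero => simp
  | add x y hx hy => rw [mul_add, add_mul, hx, hy, add_zero]

theorem commutator_mem_span_homogeneousSquareZero (h2 : (2 : k) ≠ 0) (a b : A) :
    a * b - b * a ∈ TwoSidedIdeal.span GS.homogeneousSquareZero := by
  set I := TwoSidedIdeal.span GS.homogeneousSquareZero
  have hom : ∀ p q x y, x ∈ GS.grading p → y ∈ GS.grading q → x * y - y * x ∈ I := by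
    intro p q x y hx hy
    rcases GS.commute_or_anticomm_and_mul_self_eq_zero h2 hx hy with h | ⟨h, hx2 | hy2⟩
    · rw [h.eq, sub_self]
      exact I.zero_mem
    · have hyx : y * x ∈ I :=
        I.mul_mem_left y x (TwoSidedIdeal.subset_span ⟨⟨p, hx⟩, hx2⟩)
      rw [h]
      exact I.sub_mem (I.neg_mem hyx) hyx
    · have hyx : y * x ∈ I :=
        I.mul_mem_right y x (TwoSidedIdeal.subset_span ⟨⟨q, hy⟩, hy2⟩)
      rw [h]
      exact I.sub_mem (I.neg_mem hyx) hyx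
  induction a using GS.induction_on_homogeneous generalizing b with
  | mem p x hx =>
    induction b using GS.induction_on_homogeneous with
    | mem q y hy => exact hom p q x y hx hy
    | zero => simp [I.zero_mem]
    | add y y' h h' =>
      rw [show x * (y + y') - (y + y') * x = (x * y - y * x) + (x * y' - y' * x) by noncomm_ring]
      exact I.add_mem h h'
  | zero => simp [I.zero_mem]
  | add x x' h h' =>
    rw [show (x + x') * b - b * (x + x') = (x * b - b * x) + (x' * b - b * x') by noncomm_ring]
    exact I.add_mem (h b) (h' b)

theorem grading_le_piece {P : ℤ × ZMod 2 → Prop} {p : ℤ × ZMod 2} (hp : P p) :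
    GS.grading p ≤ GS.piece P :=
  le_iSup (fun q : {q // P q} => GS.grading q) ⟨p, hp⟩

theorem Rsub_sup_A0odd_sup_A1ev_eq_top : GS.Rsub ⊔ (GS.A0odd ⊔ GS.A1ev) = ⊤ := by
  rw [eq_top_iff, ← GS.internal.submodule_iSup_eq_top]
  refine iSup_le fun ⟨m, s⟩ => ?_
  have hs : s = 0 ∨ s = 1 := by revert s; decide
  rcases Int.even_or_odd m with hm | hm <;> rcases hs with rfl | rfl
  · exact le_sup_of_le_left (GS.grading_le_piece (Or.inl ⟨hm, rfl⟩))
  · exact le_sup_of_le_right (le_sup_of_le_right (GS.grading_le_piece ⟨hm, rfl⟩))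
  · exact le_sup_of_le_right (le_sup_of_le_left (GS.grading_le_piece ⟨hm, rfl⟩))
  · exact le_sup_of_le_left (GS.grading_le_piece (Or.inr ⟨hm, rfl⟩))

theorem mem_span_homogeneousSquareZero_of_mem_piece (h2 : (2 : k) ≠ 0)
    {P : ℤ × ZMod 2 → Prop} (hP : ∀ p, P p → p.2 + p.1 = (1 : ZMod 2)) {x : A}
    (hx : x ∈ GS.piece P) : x ∈ TwoSidedIdeal.span GS.homogeneousSquareZero := by
  refine Submodule.iSup_induction _ (motive := (· ∈ TwoSidedIdeal.span GS.homogeneousSquareZero))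
    hx (fun ⟨⟨m, s⟩, hp⟩ x hx => ?_) (TwoSidedIdeal.zero_mem _) fun x y => TwoSidedIdeal.add_mem _
  exact TwoSidedIdeal.subset_span ⟨⟨_, hx⟩, GS.mul_self_eq_zero_of_odd h2 hx (hP _ hp)⟩

theorem mem_span_homogeneousSquareZero_of_mem_A0odd_sup_A1ev (h2 : (2 : k) ≠ 0) {x : A}
    (hx : x ∈ GS.A0odd ⊔ GS.A1ev) : x ∈ TwoSidedIdeal.span GS.homogeneousSquareZero := by
  obtain ⟨y, hy, z, hz, rfl⟩ := Submodule.mem_sup.mp hx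
  refine TwoSidedIdeal.add_mem _ (GS.mem_span_homogeneousSquareZero_of_mem_piece h2 ?_ hy)
    (GS.mem_span_homogeneousSquareZero_of_mem_piece h2 ?_ hz)
  · rintro ⟨m, s⟩ ⟨hm, rfl⟩
    simpa using hm.intCast_zmod_two
  · rintro ⟨m, s⟩ ⟨hm, rfl⟩
    simp [hm.intCast_zmod_two]

end GradedSuperalgebra

theorem statement4 {k A : Type} [Field k] [Ring A] [Algebra k A]
    (h2 : (2 : k) ≠ 0) (GS : GradedSuperalgebra k A) :
    -- `Nil(A) = Nil(R) ⊕ A₀ᵒᵈᵈ ⊕ A₁ᵉᵛ`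
    ({x : A | ∃ n : ℕ, x ^ n = 0} =
      {x : A | ∃ y z : A, y ∈ GS.Rsub ∧ (∃ n : ℕ, y ^ n = 0) ∧
        z ∈ GS.A0odd ⊔ GS.A1ev ∧ x = y + z}) ∧
    -- `Nil(A)` is a two-sided ideal of `A`
    (∀ x y : A, (∃ n : ℕ, x ^ n = 0) → (∃ n : ℕ, y ^ n = 0) →
      ∃ n : ℕ, (x + y) ^ n = 0) ∧
    (∀ (c : k) (x : A), (∃ n : ℕ, x ^ n = 0) → ∃ n : ℕ, (c • x) ^ n = 0) ∧
    (∀ a x : A, (∃ n : ℕ, x ^ n = 0) →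
      (∃ n : ℕ, (a * x) ^ n = 0) ∧ (∃ n : ℕ, (x * a) ^ n = 0)) ∧
    -- the quotient `A/Nil(A)` is commutative (and reduced, which is automatic)
    (∀ a b : A, ∃ n : ℕ, (a * b - b * a) ^ n = 0) := by
  have hI : ∀ x ∈ TwoSidedIdeal.span GS.homogeneousSquareZero, IsNilpotent x := fun _ =>
    TwoSidedIdeal.isNilpotent_of_mem_span fun _ hz =>
      GS.mul_mul_eq_zero_of_mem_homogeneousSquareZero hz
  have hcomm := GS.commutator_mem_span_homogeneousSquareZero h2
  have nil_add : ∀ x y : A, IsNilpotent x → IsNilpotent y → IsNilpotent (x + y) := fun _ _ =>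
    TwoSidedIdeal.isNilpotent_add_of_commutator_mem hI hcomm
  have nil_odd : ∀ z ∈ GS.A0odd ⊔ GS.A1ev, IsNilpotent z := fun _ hz =>
    hI _ (GS.mem_span_homogeneousSquareZero_of_mem_A0odd_sup_A1ev h2 hz)
  refine ⟨?_, nil_add, fun c _ hx => IsNilpotent.smul hx c, fun a _ hx =>
    ⟨TwoSidedIdeal.isNilpotent_mul_left_of_commutator_mem hI hcomm a hx,
      TwoSidedIdeal.isNilpotent_mul_right_of_commutator_mem hI hcomm a hx⟩,
    fun a b => hI _ (hcomm a b)⟩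
  ext x
  constructor
  · intro hx
    obtain ⟨y, hy, z, hz, rfl⟩ :=
      Submodule.mem_sup.mp (GS.Rsub_sup_A0odd_sup_A1ev_eq_top.ge (Submodule.mem_top (x := x)))
    have hy_nil : IsNilpotent y := by simpa using nil_add _ _ hx (nil_odd z hz).neg
    exact ⟨y, z, hy, hy_nil, hz, rfl⟩
  · rintro ⟨y, z, -, hy, hz, rfl⟩
    exact nil_add y z hy (nil_odd z hz)
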